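/- Let (S, <) be a finite poset of width w with an indexed chain partition into exactly w chains. Then (S, <) is both width-extensible and interleaving-consistent if and only if the chain partition satisfies conditions ω1, ω2, ω3 and ψ. -/
import Mathlib


open scoped Classical

/-- Two elements of a poset are *incomparable*: they are distinct and neither
is strictly below the other. -/
def Incomp {α : Type*} [PartialOrder α] (a b : α) : Prop :=
  a ≠ b ∧ ¬ a < b ∧ ¬ b < a

/-- A finset is an *antichain*: its elements are pairwise incomparable. -/
def IsAC {α : Type*} [PartialOrder α] (A : Finset α) : Prop :=
  ∀ a ∈ A, ∀ b ∈ A, a ≠ b → Incomp a b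

/-- The *width* of a finite poset: the maximum cardinality of an antichain. -/
noncomputable def posetWidth (α : Type*) [PartialOrder α] [Fintype α] : ℕ :=
  sSup {c : ℕ | ∃ A : Finset α, IsAC A ∧ A.card = c}

/-- A *width-antichain*: an antichain whose cardinality equals the width. -/
def IsWidthAC {α : Type*} [PartialOrder α] [Fintype α] (A : Finset α) : Prop :=
  IsAC A ∧ A.card = posetWidth α

/-- A finite poset is *width-extensible* if every antichain is contained in
some width-antichain. -/
def WidthExtensible (α : Type*) [PartialOrder α] [Fintype α] : Prop :=
  ∀ A : Finset α, IsAC A → ∃ W : Finset α, IsWidthAC W ∧ A ⊆ W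

/-- An *indexed chain partition* of a poset `α` into `n` chains: numbers
`m i` and maps `c i : {0,…,m i} → α` which are strictly order-preserving
(hence injective), have pairwise disjoint images, and jointly cover `α`. -/
structure ChainPartition (α : Type*) [PartialOrder α] (n : ℕ) where
  m : Fin n → ℕ
  c : Fin n → ℕ → α
  mono : ∀ i : Fin n, ∀ k l : ℕ, k < l → l ≤ m i → c i k < c i l
  disj : ∀ i j : Fin n, i ≠ j → ∀ k l : ℕ, k ≤ m i → l ≤ m j → c i k ≠ c j l
  cover : ∀ x : α, ∃ i : Fin n, ∃ k : ℕ, k ≤ m i ∧ c i k = x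

/-- Condition ω₁ : all initial states are pairwise incomparable. -/
def ChainPartition.Om1 {α : Type*} [PartialOrder α] {n : ℕ} (P : ChainPartition α n) : Prop :=
  ∀ i j : Fin n, i ≠ j → Incomp (P.c i 0) (P.c j 0)

/-- Condition ω₂ : all final states are pairwise incomparable. -/
def ChainPartition.Om2 {α : Type*} [PartialOrder α] {n : ℕ} (P : ChainPartition α n) : Prop :=
  ∀ i j : Fin n, i ≠ j → Incomp (P.c i (P.m i)) (P.c j (P.m j))

/-- Condition ω₃ : if `[i,s] < [j,t]` and `[j,t-1] < [k,u]` then `[i,s] < [k,u]`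
(for `i ≠ j`, `j ≠ k`, `1 ≤ t`). -/
def ChainPartition.Om3 {α : Type*} [PartialOrder α] {n : ℕ} (P : ChainPartition α n) : Prop :=
  ∀ i j k : Fin n, i ≠ j → j ≠ k →
    ∀ s t u : ℕ, 1 ≤ t → s ≤ P.m i → t ≤ P.m j → u ≤ P.m k →
      P.c i s < P.c j t → P.c j (t - 1) < P.c k u → P.c i s < P.c k u

/-- Condition ψ : if `[i,s-1] < [j,t]` then `¬([j,t-1] < [i,s])`
(for `i ≠ j`, `1 ≤ s`, `1 ≤ t`). -/
def ChainPartition.Psi {α : Type*} [PartialOrder α] {n : ℕ} (P : ChainPartition α n) : Prop :=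
  ∀ i j : Fin n, i ≠ j →
    ∀ s t : ℕ, 1 ≤ s → 1 ≤ t → s ≤ P.m i → t ≤ P.m j →
      P.c i (s - 1) < P.c j t → ¬ P.c j (t - 1) < P.c i s

/-- Order on (width-)antichains: `A ≤ B` iff every element of `A` is below
some element of `B`. -/
def ACle {α : Type*} [PartialOrder α] (A B : Finset α) : Prop :=
  ∀ a ∈ A, ∃ b ∈ B, a ≤ b

/-- A finite poset is *interleaving-consistent* if every width-antichain `W`
that is strictly below some width-antichain can be advanced to a
width-antichain `W'` differing from `W` in exactly one element. -/
def InterleavingConsistent (α : Type*) [PartialOrder α] [Fintype α] : Prop :=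
  ∀ W : Finset α, IsWidthAC W →
    (∃ W'' : Finset α, IsWidthAC W'' ∧ ACle W W'' ∧ W ≠ W'') →
    ∃ W' : Finset α, IsWidthAC W' ∧ ACle W W' ∧ W ≠ W' ∧ (W ∩ W').card = W.card - 1

section AuxiliaryLemmas

lemma incomp_symm {α : Type*} [PartialOrder α] {a b : α} (h : Incomp a b) : Incomp b a :=
  ⟨h.1.symm, h.2.2, h.2.1⟩

lemma isAC_singleton {α : Type*} [PartialOrder α] (a : α) : IsAC ({a} : Finset α) := by
  intro x hx y hy hxy
  simp only [Finset.mem_singleton] at hx hy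
  exact absurd (hx.trans hy.symm) hxy

lemma isAC_pair {α : Type*} [PartialOrder α] {a b : α} (h : Incomp a b) :
    IsAC ({a, b} : Finset α) := by
  intro x hx y hy hxy
  simp only [Finset.mem_insert, Finset.mem_singleton] at hx hy
  rcases hx with rfl | rfl <;> rcases hy with rfl | rfl
  · exact absurd rfl hxy
  · exact h
  · exact incomp_symm h
  · exact absurd rfl hxy

/-- A finite set with a transitive relation that is irreflexive on it has a
minimal element. -/
lemma exists_min_rel {β : Type*} [DecidableEq β] (R : β → β → Prop) [DecidablePred fun p : β × β => R p.1 p.2] :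
    ∀ D : Finset β, (∀ a ∈ D, ∀ b ∈ D, ∀ c ∈ D, R a b → R b c → R a c) →
      (∀ a ∈ D, ¬ R a a) → D.Nonempty → ∃ i ∈ D, ∀ j ∈ D, ¬ R j i := by
  classical
  intro D
  induction D using Finset.strongInduction with
  | _ D ih =>
    intro htrans hirr hne
    obtain ⟨i, hi⟩ := hne
    by_cases h : ∀ j ∈ D, ¬ R j i
    · exact ⟨i, hi, h⟩
    · push_neg at h
      obtain ⟨j, hj, hji⟩ := h
      have hiD' : i ∉ D.filter (fun x => R x i) := by
        intro hmem
        exact hirr i hi (Finset.mem_filter.1 hmem).2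
      have hss : D.filter (fun x => R x i) ⊂ D :=
        ⟨Finset.filter_subset _ _, fun hsub => hiD' (hsub hi)⟩
      obtain ⟨i', hi'D', hmin⟩ := ih _ hss
        (fun a ha b hb c hc => htrans a ((Finset.filter_subset _ _) ha)
          b ((Finset.filter_subset _ _) hb) c ((Finset.filter_subset _ _) hc))
        (fun a ha => hirr a ((Finset.filter_subset _ _) ha))
        ⟨j, Finset.mem_filter.2 ⟨hj, hji⟩⟩
      refine ⟨i', (Finset.filter_subset _ _) hi'D', ?_⟩
      intro x hx hxRi'
      have hxRi : R x i := htrans x hx i' ((Finset.filter_subset _ _) hi'D') i hi hxRi'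
        (Finset.mem_filter.1 hi'D').2
      exact hmin x (Finset.mem_filter.2 ⟨hx, hxRi⟩) hxRi'

namespace ChainPartition

variable {α : Type*} [PartialOrder α] {n : ℕ} (P : ChainPartition α n)

lemma c_le_c {i : Fin n} {k l : ℕ} (hkl : k ≤ l) (hl : l ≤ P.m i) :
    P.c i k ≤ P.c i l := by
  rcases eq_or_lt_of_le hkl with h | h
  · exact le_of_eq (by rw [h])
  · exact (P.mono i k l h hl).le

lemma idx_le {i : Fin n} {k l : ℕ} (hk : k ≤ P.m i) (hl : l ≤ P.m i)
    (h : P.c i k ≤ P.c i l) : k ≤ l := by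
  by_contra hc
  push_neg at hc
  exact absurd ((P.mono i l k hc hk).trans_le h) (lt_irrefl _)

lemma idx_lt {i : Fin n} {k l : ℕ} (hk : k ≤ P.m i) (hl : l ≤ P.m i)
    (h : P.c i k < P.c i l) : k < l := by
  by_contra hc
  push_neg at hc
  exact absurd (h.trans_le (P.c_le_c hc hk)) (lt_irrefl _)

noncomputable def ix (x : α) : Fin n := (P.cover x).choose

noncomputable def px (x : α) : ℕ := (P.cover x).choose_spec.choose

lemma px_le (x : α) : P.px x ≤ P.m (P.ix x) := (P.cover x).choose_spec.choose_spec.1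

lemma c_ix (x : α) : P.c (P.ix x) (P.px x) = x := (P.cover x).choose_spec.choose_spec.2

lemma ix_eq {i : Fin n} {k : ℕ} {x : α} (hk : k ≤ P.m i) (h : P.c i k = x) :
    P.ix x = i := by
  by_contra hne
  exact P.disj (P.ix x) i hne (P.px x) k (P.px_le x) hk (by rw [P.c_ix, h])

lemma x_le_top (x : α) : x ≤ P.c (P.ix x) (P.m (P.ix x)) := by
  conv_lhs => rw [← P.c_ix x]
  exact P.c_le_c (P.px_le x) le_rfl

lemma eq_of_ix_eq {W : Finset α} (hW : IsAC W) {x y : α} (hx : x ∈ W) (hy : y ∈ W)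
    (h : P.ix x = P.ix y) : x = y := by
  by_contra hne
  have hI := hW x hx y hy hne
  have hx' : P.c (P.ix y) (P.px x) = x := by rw [← h]; exact P.c_ix x
  have hy' : P.c (P.ix y) (P.px y) = y := P.c_ix y
  rcases le_total (P.px x) (P.px y) with hle | hle
  · have hxy : x ≤ y := by
      calc x = P.c (P.ix y) (P.px x) := hx'.symm
        _ ≤ P.c (P.ix y) (P.px y) := P.c_le_c hle (P.px_le y)
        _ = y := hy'
    exact hI.2.1 (lt_of_le_of_ne hxy hne)
  · have hpxb : P.px x ≤ P.m (P.ix y) := by rw [← h]; exact P.px_le x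
    have hyx : y ≤ x := by
      calc y = P.c (P.ix y) (P.px y) := hy'.symm
        _ ≤ P.c (P.ix y) (P.px x) := P.c_le_c hle hpxb
        _ = x := hx'
    exact hI.2.2 (lt_of_le_of_ne hyx (Ne.symm hne))

/-- `f` represents the width-antichain `W`: one element per chain. -/
def IsRep (W : Finset α) (f : Fin n → ℕ) : Prop :=
  (∀ i, f i ≤ P.m i) ∧ W = Finset.image (fun i => P.c i (f i)) Finset.univ

lemma rep_mem {W : Finset α} {f : Fin n → ℕ} (h : P.IsRep W f) (i : Fin n) :
    P.c i (f i) ∈ W := by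
  rw [h.2]
  exact Finset.mem_image_of_mem _ (Finset.mem_univ i)

lemma rep_unique {W : Finset α} {f : Fin n → ℕ} (h : P.IsRep W f) {i : Fin n} {k : ℕ}
    (hk : k ≤ P.m i) (hmem : P.c i k ∈ W) : k = f i := by
  rw [h.2, Finset.mem_image] at hmem
  obtain ⟨j, -, hj⟩ := hmem
  have hij : j = i := by
    by_contra hne
    exact P.disj j i hne _ _ (h.1 j) hk hj
  subst hij
  exact le_antisymm (P.idx_le hk (h.1 j) (le_of_eq hj.symm))
    (P.idx_le (h.1 j) hk (le_of_eq hj))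

lemma rep_card {W : Finset α} {f : Fin n → ℕ} (h : P.IsRep W f) : W.card = n := by
  rw [h.2, Finset.card_image_of_injOn, Finset.card_univ, Fintype.card_fin]
  intro i _ j _ hij
  by_contra hne
  exact P.disj i j hne _ _ (h.1 i) (h.1 j) hij

lemma exists_rep [Fintype α] (hw : posetWidth α = n) {W : Finset α} (hW : IsWidthAC W) :
    ∃ f, P.IsRep W f := by
  have hcard : W.card = n := hW.2.trans hw
  have hinj : Set.InjOn P.ix W := fun x hx y hy h => P.eq_of_ix_eq hW.1 hx hy h
  have himg : W.image P.ix = Finset.univ := by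
    apply Finset.eq_univ_of_card
    rw [Finset.card_image_of_injOn (by simpa using hinj), hcard, Fintype.card_fin]
  have hsurj : ∀ i : Fin n, ∃ x ∈ W, P.ix x = i := by
    intro i
    have : i ∈ W.image P.ix := by rw [himg]; exact Finset.mem_univ i
    simpa [Finset.mem_image] using this
  choose g hg hgix using hsurj
  refine ⟨fun i => P.px (g i), ⟨fun i => ?_, ?_⟩⟩
  · have := P.px_le (g i)
    rwa [hgix i] at this
  · apply Finset.Subset.antisymm
    · intro x hx
      rw [Finset.mem_image]
      refine ⟨P.ix x, Finset.mem_univ _, ?_⟩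
      have hxeq : g (P.ix x) = x := hinj (hg _) hx (hgix _)
      show P.c (P.ix x) (P.px (g (P.ix x))) = x
      rw [hxeq]
      exact P.c_ix x
    · intro y hy
      rw [Finset.mem_image] at hy
      obtain ⟨i, -, rfl⟩ := hy
      have hc := P.c_ix (g i)
      rw [hgix i] at hc
      rw [hc]
      exact hg i

lemma acle_rep_le {W W' : Finset α} {f f' : Fin n → ℕ} (hW' : IsAC W')
    (hrep : P.IsRep W f) (hrep' : P.IsRep W' f') (h : ACle W W') (i : Fin n) :
    f i ≤ f' i := by
  obtain ⟨b, hb, hle⟩ := h _ (P.rep_mem hrep i)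
  rw [hrep'.2, Finset.mem_image] at hb
  obtain ⟨k, -, rfl⟩ := hb
  by_cases hik : k = i
  · subst hik
    exact P.idx_le (hrep.1 _) (hrep'.1 _) hle
  · by_contra hgt
    push_neg at hgt
    have h1 : P.c i (f' i) < P.c k (f' k) :=
      lt_of_lt_of_le (P.mono i (f' i) (f i) hgt (hrep.1 i)) hle
    have hne : P.c i (f' i) ≠ P.c k (f' k) :=
      P.disj i k (fun hx => hik hx.symm) _ _ (hrep'.1 i) (hrep'.1 k)
    exact (hW' _ (P.rep_mem hrep' i) _ (P.rep_mem hrep' k) hne).2.1 h1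

lemma diff_one [Fintype α] {W W' : Finset α} {f f' : Fin n → ℕ}
    (hrep : P.IsRep W f) (hrep' : P.IsRep W' f') (hACW' : IsAC W')
    (hle : ACle W W') (hne : W ≠ W') (hcard : (W ∩ W').card = n - 1) :
    ∃ ℓ : Fin n, f ℓ < f' ℓ ∧ ∀ j, j ≠ ℓ → f j = f' j := by
  classical
  set E := Finset.univ.filter (fun i => f i = f' i) with hE
  have hWW' : W ∩ W' = E.image (fun i => P.c i (f i)) := by
    ext x
    simp only [Finset.mem_inter, Finset.mem_image, hE, Finset.mem_filter,
      Finset.mem_univ, true_and]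
    constructor
    · rintro ⟨hxW, hxW'⟩
      rw [hrep.2, Finset.mem_image] at hxW
      obtain ⟨i, -, rfl⟩ := hxW
      exact ⟨i, P.rep_unique hrep' (hrep.1 i) hxW', rfl⟩
    · rintro ⟨i, hfi, rfl⟩
      exact ⟨P.rep_mem hrep i, by rw [hfi]; exact P.rep_mem hrep' i⟩
  have hEcard : E.card = n - 1 := by
    rw [hWW', Finset.card_image_of_injOn] at hcard
    · exact hcard
    · intro i _ j _ hij
      by_contra hne2
      exact P.disj i j hne2 _ _ (hrep.1 i) (hrep.1 j) hij
  have hex : ∃ i, f i ≠ f' i := by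
    by_contra hall
    push_neg at hall
    apply hne
    rw [hrep.2, hrep'.2]
    exact Finset.image_congr (fun i _ => by rw [hall i])
  obtain ⟨i0, hi0⟩ := hex
  have hn1 : 1 ≤ n := i0.pos
  have hcompl : (Finset.univ \ E).card = 1 := by
    rw [Finset.card_sdiff_of_subset (Finset.subset_univ E), Finset.card_univ, Fintype.card_fin, hEcard]
    have hi0E : i0 ∉ E := by simp [hE, hi0]
    have hss : E ⊂ Finset.univ :=
      ⟨Finset.subset_univ E, fun hsub => hi0E (hsub (Finset.mem_univ i0))⟩
    have hElt : E.card < n := by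
      have := Finset.card_lt_card hss
      simpa using this
    omega
  obtain ⟨ℓ, hℓ⟩ := Finset.card_eq_one.mp hcompl
  have hℓmem : ℓ ∈ Finset.univ \ E := by rw [hℓ]; exact Finset.mem_singleton_self ℓ
  have hℓne : f ℓ ≠ f' ℓ := by
    simpa [hE] using hℓmem
  refine ⟨ℓ, lt_of_le_of_ne (P.acle_rep_le hACW' hrep hrep' hle ℓ) hℓne, ?_⟩
  intro j hj
  by_contra hne3
  have : j ∈ Finset.univ \ E := by simp [hE, hne3]
  rw [hℓ, Finset.mem_singleton] at this
  exact hj this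

end ChainPartition

end AuxiliaryLemmas
namespace ChainPartition

variable {α : Type*} [PartialOrder α] [Fintype α] {n : ℕ} (P : ChainPartition α n)

/-- Under width-extensibility, no element lies strictly between two
consecutive elements of a chain. -/
lemma gap (hw : posetWidth α = n) (hWE : WidthExtensible α) {i : Fin n} {s : ℕ}
    (hs : 1 ≤ s) (hsm : s ≤ P.m i) {x : α} (h1 : P.c i (s - 1) < x) (h2 : x < P.c i s) :
    False := by
  obtain ⟨W, hW, hsub⟩ := hWE {x} (isAC_singleton x)
  obtain ⟨f, hf⟩ := P.exists_rep hw hW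
  have hxW : x ∈ W := hsub (Finset.mem_singleton_self x)
  have hfiW : P.c i (f i) ∈ W := P.rep_mem hf i
  by_cases hx : P.c i (f i) = x
  · have h1' : s - 1 < f i := P.idx_lt (by omega) (hf.1 i) (by rw [hx]; exact h1)
    have h2' : f i < s := P.idx_lt (hf.1 i) hsm (by rw [hx]; exact h2)
    omega
  · have hI := hW.1 _ hfiW _ hxW hx
    rcases le_or_gt (f i) (s - 1) with hle | hlt
    · exact hI.2.1 (lt_of_le_of_lt (P.c_le_c hle (by omega)) h1)
    · have : s ≤ f i := by omega
      exact hI.2.2 (h2.trans_le (P.c_le_c this (hf.1 i)))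

lemma om1_of_we (hw : posetWidth α = n) (hWE : WidthExtensible α) : P.Om1 := by
  have key : ∀ i j : Fin n, i ≠ j → ¬ P.c i 0 < P.c j 0 := by
    intro i j hij hlt
    obtain ⟨W, hW, hsub⟩ := hWE {P.c i 0} (isAC_singleton _)
    obtain ⟨f, hf⟩ := P.exists_rep hw hW
    have h0 : (0 : ℕ) = f i :=
      P.rep_unique hf (Nat.zero_le _) (hsub (Finset.mem_singleton_self _))
    have hlt2 : P.c i (f i) < P.c j (f j) := by
      rw [← h0]
      exact hlt.trans_le (P.c_le_c (Nat.zero_le _) (hf.1 j))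
    exact (hW.1 _ (P.rep_mem hf i) _ (P.rep_mem hf j)
      (P.disj i j hij _ _ (hf.1 i) (hf.1 j))).2.1 hlt2
  intro i j hij
  exact ⟨P.disj i j hij 0 0 (Nat.zero_le _) (Nat.zero_le _), key i j hij, key j i hij.symm⟩

lemma om2_of_we (hw : posetWidth α = n) (hWE : WidthExtensible α) : P.Om2 := by
  have key : ∀ i j : Fin n, i ≠ j → ¬ P.c i (P.m i) < P.c j (P.m j) := by
    intro i j hij hlt
    obtain ⟨W, hW, hsub⟩ := hWE {P.c j (P.m j)} (isAC_singleton _)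
    obtain ⟨f, hf⟩ := P.exists_rep hw hW
    have h0 : P.m j = f j :=
      P.rep_unique hf le_rfl (hsub (Finset.mem_singleton_self _))
    have hlt2 : P.c i (f i) < P.c j (f j) := by
      rw [← h0]
      exact lt_of_le_of_lt (P.c_le_c (hf.1 i) le_rfl) hlt
    exact (hW.1 _ (P.rep_mem hf i) _ (P.rep_mem hf j)
      (P.disj i j hij _ _ (hf.1 i) (hf.1 j))).2.1 hlt2
  intro i j hij
  exact ⟨P.disj i j hij _ _ le_rfl le_rfl, key i j hij, key j i hij.symm⟩

lemma om3_of_we (hw : posetWidth α = n) (hWE : WidthExtensible α) : P.Om3 := by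
  intro i j k hij hjk s t u ht hsm htm hum h1 h2
  by_contra hc
  by_cases hik : i = k
  · subst hik
    have hus : u ≤ s := by
      by_contra h
      push_neg at h
      exact hc (P.mono i s u h hum)
    exact P.gap hw hWE ht htm h2 (lt_of_le_of_lt (P.c_le_c hus hsm) h1)
  · have hku : ¬ P.c k u < P.c i s := fun hlt => P.gap hw hWE ht htm h2 (hlt.trans h1)
    have hpair : IsAC {P.c i s, P.c k u} :=
      isAC_pair ⟨P.disj i k hik _ _ hsm hum, hc, hku⟩
    obtain ⟨W, hW, hsub⟩ := hWE _ hpair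
    obtain ⟨f, hf⟩ := P.exists_rep hw hW
    have hfi : s = f i := P.rep_unique hf hsm (hsub (by simp))
    have hfk : u = f k := P.rep_unique hf hum (hsub (by simp))
    rcases le_or_gt t (f j) with hle | hlt
    · have hlt2 : P.c i (f i) < P.c j (f j) := by
        rw [← hfi]
        exact h1.trans_le (P.c_le_c hle (hf.1 j))
      exact (hW.1 _ (P.rep_mem hf i) _ (P.rep_mem hf j)
        (P.disj i j hij _ _ (hf.1 i) (hf.1 j))).2.1 hlt2
    · have hfj : f j ≤ t - 1 := by omega
      have hlt2 : P.c j (f j) < P.c k (f k) := by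
        rw [← hfk]
        exact lt_of_le_of_lt (P.c_le_c hfj (by omega)) h2
      exact (hW.1 _ (P.rep_mem hf j) _ (P.rep_mem hf k)
        (P.disj j k hjk _ _ (hf.1 j) (hf.1 k))).2.1 hlt2

lemma psi_of_we_ic (hw : posetWidth α = n) (hWE : WidthExtensible α)
    (hIC : InterleavingConsistent α) : P.Psi := by
  intro i j hij s t hs ht hsm htm h1 h2
  have hOm2 := P.om2_of_we hw hWE
  set T := Finset.image (fun k : Fin n => P.c k (P.m k)) Finset.univ with hT
  have hTrep : P.IsRep T (fun k => P.m k) := ⟨fun k => le_rfl, rfl⟩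
  have hTAC : IsAC T := by
    intro a ha b hb hab
    rw [hT, Finset.mem_image] at ha hb
    obtain ⟨ia, -, rfl⟩ := ha
    obtain ⟨ib, -, rfl⟩ := hb
    exact hOm2 ia ib (by rintro rfl; exact hab rfl)
  have hTW : IsWidthAC T := ⟨hTAC, (P.rep_card hTrep).trans hw.symm⟩
  have hinc : Incomp (P.c i (s - 1)) (P.c j (t - 1)) := by
    refine ⟨P.disj i j hij _ _ (by omega) (by omega), ?_, ?_⟩
    · intro hlt
      exact P.gap hw hWE hs hsm hlt h2
    · intro hlt
      exact P.gap hw hWE ht htm hlt h1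
  obtain ⟨W0, hW0, hsub0⟩ := hWE _ (isAC_pair hinc)
  obtain ⟨f0, hf0⟩ := P.exists_rep hw hW0
  suffices H : ∀ N : ℕ, ∀ W : Finset α, ∀ f : Fin n → ℕ, IsWidthAC W → P.IsRep W f →
      f i = s - 1 → f j = t - 1 → (∑ k, (P.m k - f k)) ≤ N → False by
    exact H _ W0 f0 hW0 hf0
      ((P.rep_unique hf0 (by omega) (hsub0 (by simp))).symm)
      ((P.rep_unique hf0 (by omega) (hsub0 (by simp))).symm) le_rfl
  intro N
  induction N with
  | zero =>
    intro W f hW hf hfi hfj hsum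
    have : P.m i - f i = 0 := by
      have hle : P.m i - f i ≤ ∑ k, (P.m k - f k) :=
        Finset.single_le_sum (f := fun k => P.m k - f k)
          (fun k _ => Nat.zero_le _) (Finset.mem_univ i)
      omega
    omega
  | succ N ihN =>
    intro W f hW hf hfi hfj hsum
    have hWneT : W ≠ T := by
      intro hWT
      have : f i = P.m i := by
        have := P.rep_unique hTrep (hf.1 i) (by rw [← hWT]; exact P.rep_mem hf i)
        omega
      omega
    have hACleT : ACle W T := by
      intro a ha
      rw [hf.2, Finset.mem_image] at ha
      obtain ⟨k, -, rfl⟩ := ha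
      exact ⟨P.c k (P.m k), Finset.mem_image_of_mem _ (Finset.mem_univ k),
        P.c_le_c (hf.1 k) le_rfl⟩
    obtain ⟨W', hW', hle', hne', hcard'⟩ := hIC W hW ⟨T, hTW, hACleT, hWneT⟩
    obtain ⟨f', hf'⟩ := P.exists_rep hw hW'
    have hcn : (W ∩ W').card = n - 1 := by
      rw [hcard', P.rep_card hf]
    obtain ⟨ℓ, hℓlt, hℓeq⟩ := P.diff_one hf hf' hW'.1 hle' hne' hcn
    by_cases hℓi : ℓ = i
    · rw [hℓi] at hℓlt
      have hfi' : s ≤ f' i := by omega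
      have hfj' : f' j = t - 1 := by
        rw [← hℓeq j (fun h => hij ((h.trans hℓi).symm))]
        exact hfj
      have hlt2 : P.c j (f' j) < P.c i (f' i) := by
        rw [hfj']
        exact lt_of_lt_of_le h2 (P.c_le_c hfi' (hf'.1 i))
      exact (hW'.1 _ (P.rep_mem hf' j) _ (P.rep_mem hf' i)
        (P.disj j i hij.symm _ _ (hf'.1 j) (hf'.1 i))).2.1 hlt2
    · by_cases hℓj : ℓ = j
      · rw [hℓj] at hℓlt
        have hfj' : t ≤ f' j := by omega
        have hfi' : f' i = s - 1 := by
          rw [← hℓeq i (fun h => hℓi h.symm)]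
          exact hfi
        have hlt2 : P.c i (f' i) < P.c j (f' j) := by
          rw [hfi']
          exact lt_of_lt_of_le h1 (P.c_le_c hfj' (hf'.1 j))
        exact (hW'.1 _ (P.rep_mem hf' i) _ (P.rep_mem hf' j)
          (P.disj i j hij _ _ (hf'.1 i) (hf'.1 j))).2.1 hlt2
      · have hfi'' : f' i = s - 1 := by
          rw [← hℓeq i (fun h => hℓi h.symm)]
          exact hfi
        have hfj'' : f' j = t - 1 := by
          rw [← hℓeq j (fun h => hℓj h.symm)]
          exact hfj
        have hsum' : (∑ k, (P.m k - f' k)) < ∑ k, (P.m k - f k) := by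
          apply Finset.sum_lt_sum
          · intro k _
            by_cases hk : k = ℓ
            · subst hk
              have := hf'.1 k
              omega
            · have := hℓeq k hk
              omega
          · refine ⟨ℓ, Finset.mem_univ ℓ, ?_⟩
            have := hf'.1 ℓ
            omega
        exact ihN W' f' hW' hf' hfi'' hfj'' (by omega)

end ChainPartition
namespace ChainPartition

variable {α : Type*} [PartialOrder α] [Fintype α] {n : ℕ} (P : ChainPartition α n)

lemma we_of_conds (hw : posetWidth α = n) (h1 : P.Om1) (h2 : P.Om2) (h3 : P.Om3) :
    WidthExtensible α := by
  classical
  intro A hA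
  have hdex : ∀ (j : Fin n) (x : α), x ∈ A → P.ix x ≠ j →
      ∃ k, k ≤ P.m j ∧ ¬ P.c j k < x := by
    intro j x hx hne
    refine ⟨P.m j, le_rfl, fun hlt => ?_⟩
    exact (h2 j (P.ix x) (Ne.symm hne)).2.1 (hlt.trans_le (P.x_le_top x))
  set d : Fin n → α → ℕ := fun j x =>
    if hx : ∃ k, k ≤ P.m j ∧ ¬ P.c j k < x then Nat.find hx else 0 with hd
  set f : Fin n → ℕ := fun j =>
    if hj : ∃ k, k ≤ P.m j ∧ P.c j k ∈ A then Nat.find hj else A.sup (d j) with hfdef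
  have hnotin : ∀ j : Fin n, (¬ ∃ k, k ≤ P.m j ∧ P.c j k ∈ A) →
      ∀ x ∈ A, P.ix x ≠ j := by
    intro j hj x hx hixj
    apply hj
    refine ⟨P.px x, ?_, ?_⟩
    · rw [← hixj]; exact P.px_le x
    · rw [← hixj, P.c_ix]; exact hx
  have hdspec : ∀ (j : Fin n) (x : α), x ∈ A → P.ix x ≠ j →
      d j x ≤ P.m j ∧ ¬ P.c j (d j x) < x ∧
        ∀ k, k < d j x → k ≤ P.m j → P.c j k < x := by
    intro j x hx hne
    have hex := hdex j x hx hne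
    have hdx : d j x = Nat.find hex := by simp only [hd, dif_pos hex]
    refine ⟨hdx ▸ (Nat.find_spec hex).1, hdx ▸ (Nat.find_spec hex).2, ?_⟩
    intro k hk hkm
    rw [hdx] at hk
    have := Nat.find_min hex hk
    push_neg at this
    exact this hkm
  have hfle : ∀ j, f j ≤ P.m j := by
    intro j
    by_cases hj : ∃ k, k ≤ P.m j ∧ P.c j k ∈ A
    · simp only [hfdef, dif_pos hj]
      exact (Nat.find_spec hj).1
    · simp only [hfdef, dif_neg hj]
      exact Finset.sup_le (fun x hx => (hdspec j x hx (hnotin j hj x hx)).1)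
  have hFmem : ∀ (j : Fin n), (∃ k, k ≤ P.m j ∧ P.c j k ∈ A) → P.c j (f j) ∈ A := by
    intro j hj
    simp only [hfdef, dif_pos hj]
    exact (Nat.find_spec hj).2
  have hFnot : ∀ j : Fin n, (¬ ∃ k, k ≤ P.m j ∧ P.c j k ∈ A) →
      ∀ x ∈ A, ¬ P.c j (f j) < x := by
    intro j hj x hx hlt
    have hne := hnotin j hj x hx
    have hds := hdspec j x hx hne
    have hdle : d j x ≤ f j := by
      simp only [hfdef, dif_neg hj]
      exact Finset.le_sup hx
    exact hds.2.1 ((P.c_le_c hdle (hfle j)).trans_lt hlt)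
  have hF4 : ∀ j : Fin n, (¬ ∃ k, k ≤ P.m j ∧ P.c j k ∈ A) → 1 ≤ f j →
      ∃ x ∈ A, P.c j (f j - 1) < x := by
    intro j hj hfj
    have hApos : A.Nonempty := by
      rcases A.eq_empty_or_nonempty with hemp | hne
      · exfalso
        have : f j = 0 := by simp [hfdef, dif_neg hj, hemp]
        omega
      · exact hne
    obtain ⟨x, hx, hsup⟩ := Finset.exists_mem_eq_sup A hApos (d j)
    have hfx : f j = d j x := by
      simp only [hfdef, dif_neg hj]
      exact hsup
    refine ⟨x, hx, ?_⟩
    have hne := hnotin j hj x hx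
    exact (hdspec j x hx hne).2.2 (f j - 1) (by omega) (by have := hfle j; omega)
  have hcases : ∀ k : Fin n, P.c k (f k) ∈ A ∨ ∀ x ∈ A, ¬ P.c k (f k) < x := by
    intro k
    by_cases hk : ∃ l, l ≤ P.m k ∧ P.c k l ∈ A
    · exact Or.inl (hFmem k hk)
    · exact Or.inr (hFnot k hk)
  have hmain : ∀ i j : Fin n, i ≠ j → ¬ P.c i (f i) < P.c j (f j) := by
    intro i j hij hlt
    have hhit : ∀ y ∈ A, P.c i (f i) < y → False := by
      intro y hy hlty
      rcases hcases i with hiA | hino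
      · by_cases hxy : P.c i (f i) = y
        · rw [hxy] at hlty
          exact lt_irrefl _ hlty
        · exact (hA _ hiA _ hy hxy).2.1 hlty
      · exact hino y hy hlty
    by_cases hj : ∃ k, k ≤ P.m j ∧ P.c j k ∈ A
    · exact hhit _ (hFmem j hj) hlt
    · by_cases hfj : f j = 0
      · rw [hfj] at hlt
        exact (h1 i j hij).2.1 (lt_of_le_of_lt (P.c_le_c (Nat.zero_le _) (hfle i)) hlt)
      · obtain ⟨x, hx, hxlt⟩ := hF4 j hj (Nat.one_le_iff_ne_zero.2 hfj)
        have hjix : j ≠ P.ix x := by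
          intro h
          apply hj
          refine ⟨P.px x, ?_, ?_⟩
          · rw [h]; exact P.px_le x
          · rw [h, P.c_ix]; exact hx
        have h3' : P.c i (f i) < x := by
          have hccc : P.c j (f j - 1) < P.c (P.ix x) (P.px x) := by
            rw [P.c_ix]; exact hxlt
          have := h3 i j (P.ix x) hij hjix (f i) (f j) (P.px x)
            (Nat.one_le_iff_ne_zero.2 hfj) (hfle i) (hfle j) (P.px_le x) hlt hccc
          rwa [P.c_ix] at this
        exact hhit x hx h3'
  have hrep : P.IsRep (Finset.image (fun i => P.c i (f i)) Finset.univ) f := ⟨hfle, rfl⟩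
  refine ⟨Finset.image (fun i => P.c i (f i)) Finset.univ, ⟨?_, ?_⟩, ?_⟩
  · intro a ha b hb hab
    rw [Finset.mem_image] at ha hb
    obtain ⟨i, -, rfl⟩ := ha
    obtain ⟨j, -, rfl⟩ := hb
    have hij : i ≠ j := by rintro rfl; exact hab rfl
    exact ⟨hab, hmain i j hij, hmain j i hij.symm⟩
  · rw [P.rep_card hrep, hw]
  · intro x hx
    have hj : ∃ k, k ≤ P.m (P.ix x) ∧ P.c (P.ix x) k ∈ A := by
      refine ⟨P.px x, P.px_le x, ?_⟩
      rw [P.c_ix]; exact hx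
    have hmem := hFmem (P.ix x) hj
    have hixeq : P.ix x = P.ix (P.c (P.ix x) (f (P.ix x))) :=
      (P.ix_eq (hfle (P.ix x)) rfl).symm
    have hxeq : x = P.c (P.ix x) (f (P.ix x)) := P.eq_of_ix_eq hA hx hmem hixeq
    rw [hxeq]
    exact Finset.mem_image_of_mem _ (Finset.mem_univ _)

lemma ic_of_conds (hw : posetWidth α = n) (h3 : P.Om3) (hps : P.Psi) :
    InterleavingConsistent α := by
  classical
  rintro W hW ⟨W'', hW'', hle, hne⟩
  obtain ⟨f, hf⟩ := P.exists_rep hw hW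
  obtain ⟨g, hg⟩ := P.exists_rep hw hW''
  have hfg : ∀ i, f i ≤ g i := P.acle_rep_le hW''.1 hf hg hle
  have hD : ∀ b : Fin n, f b < g b → f b + 1 ≤ P.m b := fun b hb => le_trans hb (hg.1 b)
  set D : Finset (Fin n) := Finset.univ.filter (fun i => f i < g i) with hDdef
  have hmemD : ∀ b : Fin n, b ∈ D ↔ f b < g b := by
    intro b; simp [hDdef]
  have hDne : D.Nonempty := by
    by_contra hc
    rw [Finset.not_nonempty_iff_eq_empty] at hc
    apply hne
    rw [hf.2, hg.2]
    apply Finset.image_congr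
    intro i _
    have hiD : i ∉ D := by rw [hc]; exact Finset.notMem_empty i
    rw [hmemD] at hiD
    have hfgi : f i = g i := le_antisymm (hfg i) (by omega)
    show P.c i (f i) = P.c i (g i)
    rw [hfgi]
  have htrans : ∀ a ∈ D, ∀ b ∈ D, ∀ c ∈ D,
      (a ≠ b ∧ P.c a (f a) < P.c b (f b + 1)) →
      (b ≠ c ∧ P.c b (f b + 1 - 1) < P.c c (f c + 1)) → False → True := fun _ _ _ _ _ _ _ _ _ => trivial
  obtain ⟨i, hiD, hmin⟩ := exists_min_rel
    (fun a b => a ≠ b ∧ P.c a (f a) < P.c b (f b + 1)) D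
    (by
      intro a ha b hb c hc hab hbc
      obtain ⟨hab1, hab2⟩ := hab
      obtain ⟨hbc1, hbc2⟩ := hbc
      have hbm := hD b ((hmemD b).1 hb)
      have hcm := hD c ((hmemD c).1 hc)
      have ham := hD a ((hmemD a).1 ha)
      have hx : P.c b (f b + 1 - 1) < P.c c (f c + 1) := by
        simpa using hbc2
      have hac2 : P.c a (f a) < P.c c (f c + 1) :=
        h3 a b c hab1 hbc1 (f a) (f b + 1) (f c + 1) (by omega) (hf.1 a) hbm hcm hab2 hx
      refine ⟨?_, hac2⟩
      rintro rfl
      have hpsi := hps a b hab1 (f a + 1) (f b + 1) (by omega) (by omega) ham hbm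
      have h1' : P.c a (f a + 1 - 1) < P.c b (f b + 1) := by simpa using hab2
      have h2' : P.c b (f b + 1 - 1) < P.c a (f a + 1) := by simpa using hbc2
      exact hpsi h1' h2')
    (fun a _ h => h.1 rfl) hDne
  have hfgi : f i < g i := (hmemD i).1 hiD
  have hfim : f i + 1 ≤ P.m i := hD i hfgi
  have hbnotW : P.c i (f i + 1) ∉ W := by
    intro hmem
    have := P.rep_unique hf hfim hmem
    omega
  have haW : P.c i (f i) ∈ W := P.rep_mem hf i
  have hkey : ∀ k : Fin n, k ≠ i → ¬ P.c k (f k) < P.c i (f i + 1) := by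
    intro k hk hlt
    by_cases hkD : k ∈ D
    · exact hmin k hkD ⟨hk, hlt⟩
    · have hfk : f k = g k := by
        rw [hmemD] at hkD
        have := hfg k
        omega
      have hlt2 : P.c k (g k) < P.c i (g i) := by
        rw [← hfk]
        exact hlt.trans_le (P.c_le_c (by omega) (hg.1 i))
      exact (hW''.1 _ (P.rep_mem hg k) _ (P.rep_mem hg i)
        (P.disj k i hk _ _ (hg.1 k) (hg.1 i))).2.1 hlt2
  have hkey2 : ∀ k : Fin n, k ≠ i → ¬ P.c i (f i + 1) < P.c k (f k) := by
    intro k hk hlt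
    have hlt2 : P.c i (f i) < P.c k (f k) :=
      (P.mono i (f i) (f i + 1) (Nat.lt_succ_self _) hfim).trans hlt
    exact (hW.1 _ haW _ (P.rep_mem hf k)
      (P.disj i k (Ne.symm hk) _ _ (hf.1 i) (hf.1 k))).2.1 hlt2
  have hmemW' : ∀ x : α, x ∈ insert (P.c i (f i + 1)) (W.erase (P.c i (f i))) ↔
      x = P.c i (f i + 1) ∨ ∃ k : Fin n, k ≠ i ∧ x = P.c k (f k) := by
    intro x
    simp only [Finset.mem_insert, Finset.mem_erase]
    constructor
    · rintro (rfl | ⟨hxa, hxW⟩)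
      · exact Or.inl rfl
      · rw [hf.2, Finset.mem_image] at hxW
        obtain ⟨k, -, rfl⟩ := hxW
        refine Or.inr ⟨k, fun hk => ?_, rfl⟩
        rw [hk] at hxa
        exact hxa rfl
    · rintro (rfl | ⟨k, hk, rfl⟩)
      · exact Or.inl rfl
      · refine Or.inr ⟨?_, P.rep_mem hf k⟩
        exact P.disj k i hk _ _ (hf.1 k) (hf.1 i)
  refine ⟨insert (P.c i (f i + 1)) (W.erase (P.c i (f i))), ⟨?_, ?_⟩, ?_, ?_, ?_⟩
  · intro x hx y hy hxy
    rw [hmemW'] at hx hy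
    rcases hx with rfl | ⟨k, hk, rfl⟩ <;> rcases hy with rfl | ⟨l, hl, rfl⟩
    · exact absurd rfl hxy
    · exact ⟨hxy, fun h => hkey2 l hl h, fun h => hkey l hl h⟩
    · exact ⟨hxy, fun h => hkey k hk h, fun h => hkey2 k hk h⟩
    · exact hW.1 _ (P.rep_mem hf k) _ (P.rep_mem hf l) hxy
  · have hbe : P.c i (f i + 1) ∉ W.erase (P.c i (f i)) :=
      fun h => hbnotW (Finset.mem_erase.1 h).2
    rw [Finset.card_insert_of_notMem hbe, Finset.card_erase_of_mem haW,
      P.rep_card hf, hw]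
    have := i.pos
    omega
  · intro x hx
    rw [hf.2, Finset.mem_image] at hx
    obtain ⟨k, -, rfl⟩ := hx
    by_cases hk : k = i
    · refine ⟨P.c i (f i + 1), Finset.mem_insert_self _ _, ?_⟩
      rw [hk]
      exact (P.mono i (f i) (f i + 1) (Nat.lt_succ_self _) hfim).le
    · refine ⟨P.c k (f k),
        Finset.mem_insert_of_mem (Finset.mem_erase.2 ⟨?_, P.rep_mem hf k⟩), le_rfl⟩
      exact P.disj k i hk _ _ (hf.1 k) (hf.1 i)
  · intro hWeq
    apply hbnotW
    rw [hWeq]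
    exact Finset.mem_insert_self _ _
  · have hint : W ∩ insert (P.c i (f i + 1)) (W.erase (P.c i (f i))) =
        W.erase (P.c i (f i)) := by
      ext x
      simp only [Finset.mem_inter, Finset.mem_insert, Finset.mem_erase]
      constructor
      · rintro ⟨hxW, rfl | hxe⟩
        · exact absurd hxW hbnotW
        · exact hxe
      · rintro ⟨hxa, hxW⟩
        exact ⟨hxW, Or.inr ⟨hxa, hxW⟩⟩
    rw [hint, Finset.card_erase_of_mem haW]

end ChainPartition
/-- For a chain partition into `width` many chains,
width-extensibility together with interleaving-consistency is equivalent to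
ω₁ ∧ ω₂ ∧ ω₃ ∧ ψ. -/
theorem widthExtensible_ic_iff_omegas_psi {α : Type*} [PartialOrder α] [Fintype α]
    {n : ℕ} (P : ChainPartition α n) (hw : posetWidth α = n) :
    (WidthExtensible α ∧ InterleavingConsistent α) ↔
      (P.Om1 ∧ P.Om2 ∧ P.Om3 ∧ P.Psi) := by
  constructor
  · rintro ⟨hWE, hIC⟩
    exact ⟨P.om1_of_we hw hWE, P.om2_of_we hw hWE, P.om3_of_we hw hWE,
      P.psi_of_we_ic hw hWE hIC⟩
  · rintro ⟨h1, h2, h3, hps⟩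
    exact ⟨P.we_of_conds hw h1 h2 h3, P.ic_of_conds hw h3 hps⟩
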